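/- arXiv:2106.01496 — 5 statements merged into one kernel-verified Lean document; each statement's English description precedes it below -/
import Mathlib

section
/- Let G be a finite simple graph and let e = {u, v} be an edge of G. If e is β-critical for G (i.e., β(G − e) ≠ β(G)), then both vertices u and v are β-critical for G (i.e., β(G − u) ≠ β(G) and β(G − v) ≠ β(G)). -/
open SimpleGraph

/-- The independence number of a graph: the maximum size of an independent set. -/
noncomputable def indNum {V : Type*} (G : SimpleGraph V) : ℕ :=
  sSup {n | ∃ s : Finset V, (∀ a ∈ s, ∀ b ∈ s, a ≠ b → ¬ G.Adj a b) ∧ s.card = n}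

/-- The vertex cover number of a graph: the minimum size of a vertex cover. -/
noncomputable def covNum {V : Type*} (G : SimpleGraph V) : ℕ :=
  sInf {n | ∃ s : Finset V, (∀ a b : V, G.Adj a b → a ∈ s ∨ b ∈ s) ∧ s.card = n}

/-- The clique number of a graph: the maximum size of a clique. -/
noncomputable def clNum {V : Type*} (G : SimpleGraph V) : ℕ :=
  sSup {n | ∃ s : Finset V, G.IsNClique n s}

/-- The graph obtained from `G` by adding the edge `{u, v}`. -/
def adjoinEdge {V : Type*} (G : SimpleGraph V) (u v : V) : SimpleGraph V :=
  G ⊔ SimpleGraph.fromEdgeSet {s(u, v)}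

/-- `G` contains the path `P₃` as an induced subgraph. -/
def HasInducedP3 {V : Type*} (G : SimpleGraph V) : Prop :=
  ∃ u v w : V, u ≠ v ∧ v ≠ w ∧ u ≠ w ∧ G.Adj u v ∧ G.Adj v w ∧ ¬ G.Adj u w

/-- `G` is bipartite: its vertex set can be partitioned into two sets such that
every edge joins a vertex of one set to a vertex of the other. -/
def IsBipartite {V : Type*} (G : SimpleGraph V) : Prop :=
  ∃ s : Set V, ∀ ⦃a b : V⦄, G.Adj a b → (a ∈ s ∧ b ∉ s) ∨ (a ∉ s ∧ b ∈ s)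

lemma covNum_le_card {V : Type*} (G : SimpleGraph V) (s : Finset V)
    (hs : ∀ a b : V, G.Adj a b → a ∈ s ∨ b ∈ s) : covNum G ≤ s.card :=
  Nat.sInf_le ⟨s, hs, rfl⟩

lemma exists_min_cover {V : Type*} [Fintype V] (G : SimpleGraph V) :
    ∃ s : Finset V, (∀ a b : V, G.Adj a b → a ∈ s ∨ b ∈ s) ∧ s.card = covNum G := by
  have hne : {n | ∃ s : Finset V, (∀ a b : V, G.Adj a b → a ∈ s ∨ b ∈ s) ∧ s.card = n}.Nonempty :=
    ⟨Finset.univ.card, Finset.univ, fun a _ _ => Or.inl (Finset.mem_univ a), rfl⟩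
  exact Nat.sInf_mem hne

lemma aux_lt {V : Type*} [Fintype V] (G : SimpleGraph V) (u v : V) (huv : G.Adj u v)
    (h : covNum (G.deleteEdges {s(u, v)}) < covNum G) :
    covNum (G.induce ({u}ᶜ : Set V)) < covNum G := by
  classical
  obtain ⟨S, hScov, hScard⟩ := exists_min_cover (G.deleteEdges {s(u, v)})
  have hSG : u ∈ S ∨ v ∈ S → False := by
    intro h'
    have hc : ∀ a b : V, G.Adj a b → a ∈ S ∨ b ∈ S := by
      intro a b hab
      by_cases he : s(a, b) = s(u, v)
      · rcases Sym2.eq_iff.mp he with ⟨rfl, rfl⟩ | ⟨rfl, rfl⟩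
        · exact h'
        · exact h'.symm
      · exact hScov a b (by rw [deleteEdges_adj]; exact ⟨hab, by simpa using he⟩)
    have := covNum_le_card G S hc
    omega
  have hu : u ∉ S := fun hx => hSG (Or.inl hx)
  have hv : v ∉ S := fun hx => hSG (Or.inr hx)
  set S' : Finset ({u}ᶜ : Set V) := S.subtype (fun x => x ∈ ({u}ᶜ : Set V)) with hS'
  have hcov' : ∀ a b : ({u}ᶜ : Set V), (G.induce ({u}ᶜ : Set V)).Adj a b → a ∈ S' ∨ b ∈ S' := by
    intro a b hab
    have hab' : G.Adj ↑a ↑b := hab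
    have ha : (a : V) ≠ u := a.2
    have hb : (b : V) ≠ u := b.2
    have hne : s((a : V), (b : V)) ≠ s(u, v) := by
      intro he
      rcases Sym2.eq_iff.mp he with ⟨h1, _⟩ | ⟨_, h2⟩
      · exact ha h1
      · exact hb h2
    have := hScov a b (by rw [deleteEdges_adj]; exact ⟨hab', by simpa using hne⟩)
    rcases this with h1 | h1
    · exact Or.inl (by simpa [hS', Finset.mem_subtype] using h1)
    · exact Or.inr (by simpa [hS', Finset.mem_subtype] using h1)
  have hcard' : S'.card = S.card := by
    rw [hS', Finset.card_subtype]
    congr 1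
    apply Finset.filter_true_of_mem
    intro x hx
    simp only [Set.mem_compl_iff, Set.mem_singleton_iff]
    exact fun hxu => hu (hxu ▸ hx)
  have := covNum_le_card (G.induce ({u}ᶜ : Set V)) S' hcov'
  omega


/-- If an edge `{u, v}` of a finite simple graph `G` is β-critical, then both
endpoints `u` and `v` are β-critical. -/
theorem beta_critical_edge_imp_beta_critical_vertices {V : Type*} [Fintype V]
    (G : SimpleGraph V) (u v : V) (huv : G.Adj u v)
    (h : covNum (G.deleteEdges {s(u, v)}) ≠ covNum G) :
    covNum (G.induce ({u}ᶜ : Set V)) ≠ covNum G ∧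
    covNum (G.induce ({v}ᶜ : Set V)) ≠ covNum G := by
  have hle : covNum (G.deleteEdges {s(u, v)}) ≤ covNum G := by
    obtain ⟨T, hTcov, hTcard⟩ := exists_min_cover G
    have := covNum_le_card (G.deleteEdges {s(u, v)}) T
      (fun a b hab => hTcov a b (deleteEdges_adj.mp hab).1)
    omega
  have hlt : covNum (G.deleteEdges {s(u, v)}) < covNum G := lt_of_le_of_ne hle h
  have h1 := aux_lt G u v huv hlt
  have hlt' : covNum (G.deleteEdges {s(v, u)}) < covNum G := by
    rwa [Sym2.eq_swap]
  have h2 := aux_lt G v u huv.symm hlt'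
  exact ⟨Nat.ne_of_lt h1, Nat.ne_of_lt h2⟩
end

section
/- Let n ≥ 4 and let P_n be the path graph on n vertices. If n is even, then P_n is neither α-stable nor β-stable, but P_n is α-vertex-stable. If n is odd, then P_n is α-stable and β-stable, but P_n is not α-vertex-stable. -/
open SimpleGraph

/- ## Auxiliary lemmas -/

lemma indSet_zero_mem {V : Type*} (G : SimpleGraph V) :
    0 ∈ {n | ∃ s : Finset V, (∀ a ∈ s, ∀ b ∈ s, a ≠ b → ¬ G.Adj a b) ∧ s.card = n} :=
  ⟨∅, by simp, rfl⟩

lemma indSet_bddAbove {V : Type*} [Fintype V] (G : SimpleGraph V) :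
    BddAbove {n | ∃ s : Finset V, (∀ a ∈ s, ∀ b ∈ s, a ≠ b → ¬ G.Adj a b) ∧ s.card = n} := by
  refine ⟨Fintype.card V, fun m hm => ?_⟩
  obtain ⟨s, -, rfl⟩ := hm
  exact s.card_le_univ

lemma indNum_le_of_map {V : Type*} [Fintype V] {m : ℕ} (G : SimpleGraph V) (f : V → Fin m)
    (h : ∀ a b : V, a ≠ b → f a = f b → G.Adj a b) : indNum G ≤ m := by
  apply csSup_le ⟨0, indSet_zero_mem G⟩
  rintro k ⟨s, hs, rfl⟩
  have hinj : Set.InjOn f s := by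
    intro a ha b hb hf
    by_contra hab
    exact hs a ha b hb hab (h a b hab hf)
  calc s.card = (s.image f).card := (Finset.card_image_of_injOn hinj).symm
    _ ≤ Fintype.card (Fin m) := Finset.card_le_univ _
    _ = m := Fintype.card_fin m

lemma le_indNum_of_fn {V : Type*} [Fintype V] [DecidableEq V] {m : ℕ} (G : SimpleGraph V)
    (g : Fin m → V) (hinj : Function.Injective g)
    (h : ∀ i j : Fin m, ¬ G.Adj (g i) (g j)) : m ≤ indNum G := by
  apply le_csSup (indSet_bddAbove G)
  refine ⟨Finset.univ.image g, ?_, ?_⟩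
  · rintro a ha b hb hab
    simp only [Finset.mem_image] at ha hb
    obtain ⟨i, -, rfl⟩ := ha
    obtain ⟨j, -, rfl⟩ := hb
    exact h i j
  · rw [Finset.card_image_of_injective _ hinj, Finset.card_univ, Fintype.card_fin]

lemma covNum_add_indNum {V : Type*} [Fintype V] [DecidableEq V] (G : SimpleGraph V) :
    covNum G + indNum G = Fintype.card V := by
  obtain ⟨s, hs, hscard⟩ := Nat.sSup_mem ⟨0, indSet_zero_mem G⟩ (indSet_bddAbove G)
  obtain ⟨t, ht, htcard⟩ := Nat.sInf_mem (s := {n | ∃ s : Finset V,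
      (∀ a b : V, G.Adj a b → a ∈ s ∨ b ∈ s) ∧ s.card = n})
      ⟨Fintype.card V, Finset.univ, fun a b _ => Or.inl (Finset.mem_univ a), Finset.card_univ⟩
  have h1 : covNum G ≤ (sᶜ : Finset V).card := by
    apply Nat.sInf_le
    refine ⟨sᶜ, fun a b hab => ?_, rfl⟩
    by_contra hc
    push_neg at hc
    simp only [Finset.mem_compl, not_not] at hc
    exact hs a hc.1 b hc.2 (G.ne_of_adj hab) hab
  have h2 : (tᶜ : Finset V).card ≤ indNum G := by
    apply le_csSup (indSet_bddAbove G)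
    refine ⟨tᶜ, fun a ha b hb hab hadj => ?_, rfl⟩
    simp only [Finset.mem_compl] at ha hb
    rcases ht a b hadj with h | h
    · exact ha h
    · exact hb h
  have hsc : (sᶜ : Finset V).card = Fintype.card V - s.card := Finset.card_compl s
  have htc : (tᶜ : Finset V).card = Fintype.card V - t.card := Finset.card_compl t
  have h3 : s.card ≤ Fintype.card V := s.card_le_univ
  have h4 : t.card ≤ Fintype.card V := t.card_le_univ
  have hind : indNum G = s.card := hscard.symm
  have hcov : covNum G = t.card := htcard.symm
  omega

lemma indNum_pathGraph (n : ℕ) : indNum (pathGraph n) = (n + 1) / 2 := by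
  apply le_antisymm
  · apply indNum_le_of_map _ (fun j => (⟨j.val / 2, by omega⟩ : Fin ((n+1)/2)))
    intro a b hne hf
    simp only [Fin.mk.injEq] at hf
    rw [pathGraph_adj]
    have : a.val ≠ b.val := fun h => hne (Fin.ext h)
    omega
  · apply le_indNum_of_fn _ (fun t : Fin ((n+1)/2) => (⟨2 * t.val, by omega⟩ : Fin n))
    · intro i j h
      simp only [Fin.mk.injEq] at h
      exact Fin.ext (by omega)
    · intro i j h
      rw [pathGraph_adj] at h
      simp only at h
      omega

lemma indNum_path_del01 (n : ℕ) (hn : 4 ≤ n) (heven : n % 2 = 0) :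
    indNum ((pathGraph n).deleteEdges
      {s((⟨0, by omega⟩ : Fin n), (⟨1, by omega⟩ : Fin n))}) = n / 2 + 1 := by
  apply le_antisymm
  · apply indNum_le_of_map _ (fun j => (⟨(j.val + 1) / 2, by omega⟩ : Fin (n/2 + 1)))
    intro a b hne hf
    simp only [Fin.mk.injEq] at hf
    have hv : a.val ≠ b.val := fun h => hne (Fin.ext h)
    rw [deleteEdges_adj, pathGraph_adj, Set.mem_singleton_iff, Sym2.eq_iff]
    simp only [Fin.ext_iff]
    omega
  · apply le_indNum_of_fn _ (fun t : Fin (n/2 + 1) =>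
      (⟨if t.val = 0 then 0 else 2 * t.val - 1, by split <;> omega⟩ : Fin n))
    · intro i j h
      simp only [Fin.mk.injEq] at h
      apply Fin.ext
      split_ifs at h <;> omega
    · intro i j h
      rw [deleteEdges_adj, pathGraph_adj, Set.mem_singleton_iff, Sym2.eq_iff] at h
      simp only [Fin.ext_iff] at h
      obtain ⟨h1, h2⟩ := h
      have hi := i.isLt
      have hj := j.isLt
      split_ifs at h1 h2 <;>
        (try simp only [false_or, or_false, false_and, and_false, true_and, and_true,
          eq_self_iff_true, not_false_eq_true] at h1 h2) <;> omega

lemma indNum_path_del (n : ℕ) (hodd : n % 2 = 1) (u v : Fin n) (huv : u.val + 1 = v.val) :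
    indNum ((pathGraph n).deleteEdges {s(u, v)}) = (n + 1) / 2 := by
  have hv := v.isLt
  apply le_antisymm
  · apply indNum_le_of_map _ (fun j =>
      (⟨if j.val ≤ u.val then j.val / 2 else (u.val + 2) / 2 + (j.val - u.val - 1) / 2,
        by have := j.isLt; split <;> omega⟩ : Fin ((n+1)/2)))
    intro a b hne hf
    simp only [Fin.mk.injEq] at hf
    have hab : a.val ≠ b.val := fun h => hne (Fin.ext h)
    rw [deleteEdges_adj, pathGraph_adj, Set.mem_singleton_iff, Sym2.eq_iff]
    simp only [Fin.ext_iff]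
    split_ifs at hf <;> omega
  · apply le_indNum_of_fn _ (fun t : Fin ((n+1)/2) => (⟨2 * t.val, by omega⟩ : Fin n))
    · intro i j h
      simp only [Fin.mk.injEq] at h
      exact Fin.ext (by omega)
    · intro i j h
      rw [deleteEdges_adj, pathGraph_adj] at h
      simp only at h
      omega

lemma indNum_induce_le (n : ℕ) (v : Fin n) :
    indNum ((pathGraph n).induce ({v}ᶜ : Set (Fin n))) ≤ (n + 1) / 2 := by
  refine indNum_le_of_map (G := (pathGraph n).induce ({v}ᶜ : Set (Fin n)))
    (fun j => (⟨(j : Fin n).val / 2, by have := (j : Fin n).isLt; omega⟩ : Fin ((n+1)/2))) ?_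
  intro a b hne hf
  simp only [Fin.mk.injEq] at hf
  have hab : (a : Fin n).val ≠ (b : Fin n).val := by
    intro h
    exact hne (Subtype.ext (Fin.ext h))
  simp only [comap_adj, Function.Embedding.coe_subtype, pathGraph_adj]
  omega

lemma indNum_induce_del0_le (n : ℕ) (hn : 4 ≤ n) (hodd : n % 2 = 1) :
    indNum ((pathGraph n).induce ({(⟨0, by omega⟩ : Fin n)}ᶜ : Set (Fin n))) ≤ (n - 1) / 2 := by
  refine indNum_le_of_map
    (G := (pathGraph n).induce ({(⟨0, by omega⟩ : Fin n)}ᶜ : Set (Fin n)))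
    (fun j => (⟨((j : Fin n).val - 1) / 2, by
      have h1 := (j : Fin n).isLt
      have h2 := j.2
      simp only [Set.mem_compl_iff, Set.mem_singleton_iff, Fin.ext_iff] at h2
      omega⟩ : Fin ((n-1)/2))) ?_
  intro a b hne hf
  simp only [Fin.mk.injEq] at hf
  have hab : (a : Fin n).val ≠ (b : Fin n).val := by
    intro h
    exact hne (Subtype.ext (Fin.ext h))
  have h2a := a.2
  have h2b := b.2
  simp only [Set.mem_compl_iff, Set.mem_singleton_iff, Fin.ext_iff] at h2a h2b
  simp only [comap_adj, Function.Embedding.coe_subtype, pathGraph_adj]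
  omega

lemma le_indNum_induce (n : ℕ) (hn : 4 ≤ n) (heven : n % 2 = 0) (v : Fin n) :
    n / 2 ≤ indNum ((pathGraph n).induce ({v}ᶜ : Set (Fin n))) := by
  have hv := v.isLt
  apply le_indNum_of_fn _ (fun t : Fin (n/2) =>
    (⟨⟨if v.val % 2 = 1 then 2 * t.val else
        if 2 * t.val < v.val then 2 * t.val else 2 * t.val + 1,
      by have := t.isLt; split_ifs <;> omega⟩, by
      simp only [Set.mem_compl_iff, Set.mem_singleton_iff, Fin.ext_iff]
      have := t.isLt
      split_ifs <;> omega⟩ : ↥({v}ᶜ : Set (Fin n))))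
  · intro i j h
    simp only [Subtype.mk.injEq, Fin.mk.injEq] at h
    apply Fin.ext
    split_ifs at h <;> omega
  · intro i j h
    simp only [comap_adj, Function.Embedding.coe_subtype, pathGraph_adj] at h
    split_ifs at h <;> omega

/-- For `n ≥ 4`: if `n` is even then `P_n` is neither α-stable nor β-stable but is
α-vertex-stable; if `n` is odd then `P_n` is α-stable and β-stable but not
α-vertex-stable. -/
theorem pathGraph_alpha_beta_stability (n : ℕ) (hn : 4 ≤ n) :
    (Even n →
      ¬ (∀ e ∈ (pathGraph n).edgeSet,
          indNum ((pathGraph n).deleteEdges {e}) = indNum (pathGraph n)) ∧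
      ¬ (∀ e ∈ (pathGraph n).edgeSet,
          covNum ((pathGraph n).deleteEdges {e}) = covNum (pathGraph n)) ∧
      (∀ v : Fin n, indNum ((pathGraph n).induce ({v}ᶜ : Set (Fin n))) =
          indNum (pathGraph n))) ∧
    (Odd n →
      (∀ e ∈ (pathGraph n).edgeSet,
          indNum ((pathGraph n).deleteEdges {e}) = indNum (pathGraph n)) ∧
      (∀ e ∈ (pathGraph n).edgeSet,
          covNum ((pathGraph n).deleteEdges {e}) = covNum (pathGraph n)) ∧
      ¬ (∀ v : Fin n, indNum ((pathGraph n).induce ({v}ᶜ : Set (Fin n))) =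
          indNum (pathGraph n))) := by
  have hcard : Fintype.card (Fin n) = n := Fintype.card_fin n
  constructor
  · intro heven
    have he : n % 2 = 0 := Nat.even_iff.mp heven
    have hmem : s((⟨0, by omega⟩ : Fin n), (⟨1, by omega⟩ : Fin n)) ∈
        (pathGraph n).edgeSet := by
      rw [mem_edgeSet, pathGraph_adj]
      left
      rfl
    refine ⟨?_, ?_, ?_⟩
    · intro hall
      have h1 := hall _ hmem
      rw [indNum_path_del01 n hn he, indNum_pathGraph] at h1
      omega
    · intro hall
      have h1 := hall _ hmem
      have d1 := covNum_add_indNum ((pathGraph n).deleteEdges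
        {s((⟨0, by omega⟩ : Fin n), (⟨1, by omega⟩ : Fin n))})
      have d2 := covNum_add_indNum (pathGraph n)
      rw [indNum_path_del01 n hn he] at d1
      rw [indNum_pathGraph] at d2
      simp only [Fintype.card_fin] at d1 d2
      omega
    · intro v
      have h1 := indNum_induce_le n v
      have h2 := le_indNum_induce n hn he v
      rw [indNum_pathGraph]
      omega
  · intro hodd
    have ho : n % 2 = 1 := Nat.odd_iff.mp hodd
    refine ⟨?_, ?_, ?_⟩
    · intro e he
      induction e using Sym2.ind with
      | _ u v =>
        rw [mem_edgeSet, pathGraph_adj] at he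
        rw [indNum_pathGraph]
        rcases he with h | h
        · exact indNum_path_del n ho u v h
        · rw [Sym2.eq_swap]
          exact indNum_path_del n ho v u h
    · intro e he
      induction e using Sym2.ind with
      | _ u v =>
        rw [mem_edgeSet, pathGraph_adj] at he
        have d2 := covNum_add_indNum (pathGraph n)
        rw [indNum_pathGraph] at d2
        simp only [Fintype.card_fin] at d2
        rcases he with h | h
        · have d1 := covNum_add_indNum ((pathGraph n).deleteEdges {s(u, v)})
          rw [indNum_path_del n ho u v h] at d1
          simp only [Fintype.card_fin] at d1
          omega
        · have d1 := covNum_add_indNum ((pathGraph n).deleteEdges {s(v, u)})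
          rw [indNum_path_del n ho v u h] at d1
          simp only [Fintype.card_fin] at d1
          rw [show s(u, v) = s(v, u) from Sym2.eq_swap]
          omega
    · intro hall
      have h1 := hall ⟨0, by omega⟩
      have h2 := indNum_induce_del0_le n hn ho
      rw [indNum_pathGraph] at h1
      omega
end

section
/- Let F be a finite simple acyclic graph (a forest). If F has at least one edge and F contains no P_3 as an induced subgraph, then F is ω-unfrozen and χ-unfrozen. If F contains P_3 as an induced subgraph, then F is neither ω-unfrozen nor χ-unfrozen. -/
open SimpleGraph

/-!
Both graph parameters of a forest with an edge equal 2, and adding the edge `uv` to a graph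
creates the triangle `uvw` for every induced path `u - v - w`. Without induced `P₃` every
component is a single vertex or a single edge, so two distinct non-adjacent vertices lie in
different components; joining them keeps the graph a forest, with an edge, so neither
parameter changes.
-/

namespace SimpleGraph

variable {V : Type*} {G : SimpleGraph V}

lemma le_adjoinEdge (u v : V) : G ≤ adjoinEdge G u v := le_sup_left

lemma adjoinEdge_adj_self {u v : V} (huv : u ≠ v) : (adjoinEdge G u v).Adj u v :=
  Or.inr ((edge_adj u v u v).mpr ⟨Or.inl ⟨rfl, rfl⟩, huv⟩)

lemma adjoinEdge_ne_bot {u v : V} (huv : u ≠ v) : adjoinEdge G u v ≠ ⊥ :=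
  ne_bot_iff_exists_adj.mpr ⟨u, v, adjoinEdge_adj_self huv⟩

lemma clNum_eq_of_not_cliqueFree_of_cliqueFree {n : ℕ} (h : ¬ G.CliqueFree n)
    (h' : G.CliqueFree (n + 1)) : clNum G = n := by
  obtain ⟨s, hs⟩ : ∃ s, G.IsNClique n s := by simpa [CliqueFree] using h
  have hbound : ∀ m ∈ {m | ∃ s : Finset V, G.IsNClique m s}, m ≤ n := by
    rintro m ⟨t, ht⟩
    by_contra! hm
    exact ht.not_cliqueFree (h'.mono hm)
  exact le_antisymm (csSup_le ⟨n, s, hs⟩ hbound) (le_csSup ⟨n, hbound⟩ ⟨s, hs⟩)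

lemma IsAcyclic.clNum_eq_two (hG : G.IsAcyclic) (hne : G ≠ ⊥) : clNum G = 2 :=
  clNum_eq_of_not_cliqueFree_of_cliqueFree (cliqueFree_two.not.mpr hne) (hG.cliqueFree le_rfl)

lemma IsAcyclic.chromaticNumber_eq_two (hG : G.IsAcyclic) (hne : G ≠ ⊥) :
    G.chromaticNumber = 2 :=
  chromaticNumber_eq_two_iff.mpr ⟨hG.isBipartite, hne⟩

lemma adj_of_reachable_of_not_hasInducedP3 (hG : ¬ HasInducedP3 G) {u v : V}
    (h : G.Reachable u v) (huv : u ≠ v) : G.Adj u v := by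
  rw [reachable_iff_reflTransGen] at h
  induction h with
  | refl => exact absurd rfl huv
  | @tail x y _ hxy ih =>
    by_cases hux : u = x
    · exact hux ▸ hxy
    by_contra hnadj
    exact hG ⟨u, x, y, hux, hxy.ne, huv, ih hux, hxy, hnadj⟩

lemma IsAcyclic.adjoinEdge_of_not_hasInducedP3 (hG : G.IsAcyclic) (hP3 : ¬ HasInducedP3 G)
    {u v : V} (huv : u ≠ v) (hnadj : ¬ G.Adj u v) : (adjoinEdge G u v).IsAcyclic :=
  hG.sup_edge_of_not_reachable fun h => hnadj (adj_of_reachable_of_not_hasInducedP3 hP3 h huv)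

lemma isNClique_three_adjoinEdge [DecidableEq V] {u v w : V} (huw : u ≠ w) (huv : G.Adj u v)
    (hvw : G.Adj v w) : (adjoinEdge G u w).IsNClique 3 {u, v, w} :=
  is3Clique_triple_iff.mpr
    ⟨le_adjoinEdge u w huv, adjoinEdge_adj_self huw, le_adjoinEdge u w hvw⟩

end SimpleGraph

theorem forest_omega_chi_unfrozenness_general {V : Type*} (F : SimpleGraph V)
    (hacyc : F.IsAcyclic) :
    (F.edgeSet.Nonempty → ¬ HasInducedP3 F →
      (∀ u v : V, u ≠ v → ¬ F.Adj u v → clNum (adjoinEdge F u v) = clNum F) ∧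
      (∀ u v : V, u ≠ v → ¬ F.Adj u v →
          (adjoinEdge F u v).chromaticNumber = F.chromaticNumber)) ∧
    (HasInducedP3 F →
      ¬ (∀ u v : V, u ≠ v → ¬ F.Adj u v → clNum (adjoinEdge F u v) = clNum F) ∧
      ¬ (∀ u v : V, u ≠ v → ¬ F.Adj u v →
          (adjoinEdge F u v).chromaticNumber = F.chromaticNumber)) := by
  constructor
  · intro hE hP3
    have hne : F ≠ ⊥ := edgeSet_nonempty.mp hE
    constructor
    · intro u v huv hnadj
      have hforest := hacyc.adjoinEdge_of_not_hasInducedP3 hP3 huv hnadj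
      rw [hforest.clNum_eq_two (adjoinEdge_ne_bot huv), hacyc.clNum_eq_two hne]
    · intro u v huv hnadj
      have hforest := hacyc.adjoinEdge_of_not_hasInducedP3 hP3 huv hnadj
      rw [hforest.chromaticNumber_eq_two (adjoinEdge_ne_bot huv), hacyc.chromaticNumber_eq_two hne]
  · rintro ⟨u, v, w, -, -, huw, huv, hvw, hnuw⟩
    have hne : F ≠ ⊥ := ne_bot_iff_exists_adj.mpr ⟨u, v, huv⟩
    classical
    have htriangle := isNClique_three_adjoinEdge huw huv hvw
    constructor
    · intro h
      have h3 : clNum (adjoinEdge F u w) = 3 :=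
        clNum_eq_of_not_cliqueFree_of_cliqueFree htriangle.not_cliqueFree
          ((hacyc.cliqueFree le_rfl).sup_edge u w)
      have h2 := hacyc.clNum_eq_two hne
      have := h u w huw hnuw
      omega
    · intro h
      have h3 := htriangle.isClique.card_le_chromaticNumber
      rw [htriangle.card_eq, h u w huw hnuw, hacyc.chromaticNumber_eq_two hne] at h3
      norm_num at h3

/-- For a finite forest `F`: if `F` has an edge but no induced `P₃`, then `F` is
ω-unfrozen and χ-unfrozen; if `F` has an induced `P₃`, then `F` is neither. -/
theorem forest_omega_chi_unfrozenness {V : Type*} [Fintype V] (F : SimpleGraph V)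
    (hacyc : F.IsAcyclic) :
    (F.edgeSet.Nonempty → ¬ HasInducedP3 F →
      (∀ u v : V, u ≠ v → ¬ F.Adj u v → clNum (adjoinEdge F u v) = clNum F) ∧
      (∀ u v : V, u ≠ v → ¬ F.Adj u v →
          (adjoinEdge F u v).chromaticNumber = F.chromaticNumber)) ∧
    (HasInducedP3 F →
      ¬ (∀ u v : V, u ≠ v → ¬ F.Adj u v → clNum (adjoinEdge F u v) = clNum F) ∧
      ¬ (∀ u v : V, u ≠ v → ¬ F.Adj u v →
          (adjoinEdge F u v).chromaticNumber = F.chromaticNumber)) :=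
  forest_omega_chi_unfrozenness_general F hacyc
end

section
/- Let G be a finite simple bipartite graph with at least 2 edges. Then G is χ-vertex-stable if and only if every vertex v of G satisfies deg(v) < |E(G)|, where deg(v) is the degree of v and |E(G)| is the number of edges of G. -/
open SimpleGraph

/-!
A bipartite graph has chromatic number 2 exactly when it has an edge, and every induced subgraph
of a bipartite graph is bipartite. So `G` (which has an edge) is χ-vertex-stable iff no `G - v` is
edgeless, i.e. iff no vertex lies on every edge, i.e. iff no vertex has degree `|E(G)|`.
-/

open Finset

namespace SimpleGraph

variable {V : Type*} {G : SimpleGraph V}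

theorem _root_.IsBipartite.isBipartite (h : _root_.IsBipartite G) : G.IsBipartite :=
  let ⟨s, hs⟩ := h
  IsBipartiteWith.isBipartite (t := sᶜ) ⟨disjoint_compl_right, hs⟩

theorem IsBipartite.chromaticNumber_eq_two_iff (h : G.IsBipartite) :
    G.chromaticNumber = 2 ↔ G ≠ ⊥ := by
  rw [SimpleGraph.chromaticNumber_eq_two_iff, and_iff_right h]

lemma induce_compl_singleton_eq_bot_iff (v : V) :
    G.induce ({v}ᶜ : Set V) = ⊥ ↔ ∀ e ∈ G.edgeSet, v ∈ e := by
  simp only [← edgeSet_eq_empty, Set.eq_empty_iff_forall_notMem, Sym2.forall, mem_edgeSet,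
    comap_adj, Function.Embedding.subtype_apply, Subtype.forall, Set.mem_compl_iff,
    Set.mem_singleton_iff, Sym2.mem_iff]
  grind

lemma degree_eq_card_edgeFinset_iff [Fintype V] [DecidableRel G.Adj] (v : V) :
    G.degree v = #G.edgeFinset ↔ ∀ e ∈ G.edgeSet, v ∈ e := by
  classical
  rw [← card_incidenceFinset_eq_degree, incidenceFinset_eq_filter, card_filter_eq_iff]
  simp only [mem_edgeFinset]

lemma degree_lt_card_edgeFinset_iff [Fintype V] [DecidableRel G.Adj] (v : V) :
    G.degree v < #G.edgeFinset ↔ G.induce ({v}ᶜ : Set V) ≠ ⊥ := by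
  rw [(G.degree_le_card_edgeFinset v).lt_iff_ne, Ne, Ne, degree_eq_card_edgeFinset_iff,
    induce_compl_singleton_eq_bot_iff]

end SimpleGraph

theorem bipartite_chi_vertexStable_iff_general {V : Type*} [Fintype V]
    (G : SimpleGraph V) [DecidableRel G.Adj] (hb : _root_.IsBipartite G)
    (h2 : 2 ≤ G.edgeFinset.card) :
    (∀ v : V, (G.induce ({v}ᶜ : Set V)).chromaticNumber = G.chromaticNumber) ↔
    (∀ v : V, G.degree v < G.edgeFinset.card) := by
  have hG : G.IsBipartite := hb.isBipartite
  have hχ : G.chromaticNumber = 2 :=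
    hG.chromaticNumber_eq_two_iff.mpr (edgeFinset_nonempty.mp (card_pos.mp (by omega)))
  have hχv (v : V) :
      (G.induce ({v}ᶜ : Set V)).chromaticNumber = 2 ↔ G.induce ({v}ᶜ : Set V) ≠ ⊥ :=
    IsBipartite.chromaticNumber_eq_two_iff (hG.of_hom (Embedding.induce _).toHom)
  simp only [hχ, hχv, degree_lt_card_edgeFinset_iff]

/-- A finite bipartite graph with at least 2 edges is χ-vertex-stable iff every
vertex has degree strictly less than the number of edges. -/
theorem bipartite_chi_vertexStable_iff {V : Type*} [Fintype V] [DecidableEq V]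
    (G : SimpleGraph V) [DecidableRel G.Adj] (hb : _root_.IsBipartite G)
    (h2 : 2 ≤ G.edgeFinset.card) :
    (∀ v : V, (G.induce ({v}ᶜ : Set V)).chromaticNumber = G.chromaticNumber) ↔
    (∀ v : V, G.degree v < G.edgeFinset.card) :=
  bipartite_chi_vertexStable_iff_general G hb h2
end

section
/- Let G be a finite simple bipartite graph with at least one edge. Then G is χ-unfrozen if and only if G contains no P_3 as an induced subgraph. Moreover, under the same hypotheses, G is ω-unfrozen if and only if G contains no P_3 as an induced subgraph. -/
open SimpleGraph

/-!
A bipartite graph is triangle-free, so if it has no induced `P₃` every vertex has at most one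
neighbour. Then two distinct non-adjacent vertices lie in different components, and recolouring
one component keeps `G + uv` 2-colourable, hence triangle-free: both `χ` and `ω` stay equal to 2.
Conversely, adding the missing edge of an induced `P₃` creates a triangle, raising both to 3.
-/

theorem IsBipartite.colorable_two {V : Type*} {G : SimpleGraph V} (hb : _root_.IsBipartite G) :
    G.Colorable 2 := by
  classical
  obtain ⟨s, hs⟩ := hb
  exact ⟨Coloring.mk (fun x => if x ∈ s then (0 : Fin 2) else 1) fun hab => by
    rcases hs hab with h | h <;> simp [h.1, h.2]⟩

theorem adjoinEdge_eq_sup_edge {V : Type*} (G : SimpleGraph V) (u v : V) :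
    adjoinEdge G u v = G ⊔ edge u v :=
  rfl

theorem clNum_eq_cliqueNum {V : Type*} (G : SimpleGraph V) : clNum G = G.cliqueNum :=
  rfl

theorem HasInducedP3.exists_not_cliqueFree_sup_edge {V : Type*} {G : SimpleGraph V}
    (hP : HasInducedP3 G) : ∃ u v, u ≠ v ∧ ¬ G.Adj u v ∧ ¬ (G ⊔ edge u v).CliqueFree 3 := by
  classical
  obtain ⟨x, y, z, -, -, hxz, hxy, hyz, hnxz⟩ := hP
  refine ⟨x, z, hxz, hnxz, fun h => h {x, y, z} (is3Clique_triple_iff.mpr ⟨?_, ?_, ?_⟩)⟩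
  · exact Or.inl hxy
  · exact Or.inr ((edge_adj ..).mpr ⟨Or.inl ⟨rfl, rfl⟩, hxz⟩)
  · exact Or.inl hyz

namespace SimpleGraph

variable {α : Type*} {G : SimpleGraph α}

theorem cliqueFree_iff_cliqueNum_lt [Finite α] {n : ℕ} : G.CliqueFree n ↔ G.cliqueNum < n := by
  constructor
  · intro h
    obtain ⟨s, hs⟩ := G.exists_isNClique_cliqueNum
    by_contra hn
    exact h.mono (not_lt.mp hn) s hs
  · intro h s hs
    exact (hs.card_eq ▸ hs.isClique.card_le_cliqueNum).not_gt h

theorem cliqueNum_eq_two_iff [Finite α] (hne : G ≠ ⊥) : G.cliqueNum = 2 ↔ G.CliqueFree 3 := by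
  have h2 : ¬ G.cliqueNum < 2 := by rwa [← cliqueFree_iff_cliqueNum_lt, cliqueFree_two]
  rw [cliqueFree_iff_cliqueNum_lt]
  omega

theorem subsingleton_neighborSet_of_cliqueFree_three (hG : G.CliqueFree 3)
    (hP : ¬ HasInducedP3 G) (x : α) : (G.neighborSet x).Subsingleton := by
  classical
  intro a ha b hb
  by_contra hab
  have hnab : ¬ G.Adj a b := fun h =>
    hG {x, a, b} (is3Clique_triple_iff.mpr ⟨ha, hb, h⟩)
  exact hP ⟨a, x, b, ha.ne', hb.ne, hab, ha.symm, hb, hnab⟩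

theorem eq_or_adj_of_reachable (hG : ∀ x, (G.neighborSet x).Subsingleton) {u v : α}
    (h : G.Reachable u v) : u = v ∨ G.Adj u v := by
  obtain ⟨p⟩ := h
  induction p with
  | nil => exact Or.inl rfl
  | @cons u w v huw _ ih =>
    rcases ih with rfl | hwv
    · exact Or.inr huw
    · exact Or.inl (hG w huw.symm hwv)

theorem Colorable.sup_edge_of_not_reachable {n : ℕ} (hG : G.Colorable n) (hn : 2 ≤ n)
    {u v : α} (h : ¬ G.Reachable u v) : (G ⊔ edge u v).Colorable n := by
  classical
  obtain ⟨C⟩ := hG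
  have : Nontrivial (Fin n) := Fin.nontrivial_iff_two_le.mpr hn
  obtain ⟨c, hc⟩ := exists_ne (C u)
  let σ := Equiv.swap (C v) c
  refine ⟨Coloring.mk (fun x => if G.Reachable v x then σ (C x) else C x) ?_⟩
  intro a b hab
  rcases hab with hab | hab
  · have hreach : G.Reachable v a ↔ G.Reachable v b :=
      ⟨fun h => h.trans hab.reachable, fun h => h.trans hab.symm.reachable⟩
    by_cases ha : G.Reachable v a
    · simpa [ha, hreach.mp ha] using C.valid hab
    · simpa [ha, hreach.not.mp ha] using C.valid hab
  · have hvu : ¬ G.Reachable v u := fun h' => h h'.symm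
    rcases (edge_adj ..).mp hab with ⟨⟨rfl, rfl⟩ | ⟨rfl, rfl⟩, -⟩
    · simpa [hvu, σ] using hc.symm
    · simpa [hvu, σ] using hc

theorem colorable_two_sup_edge (hG : G.Colorable 2) (hP : ¬ HasInducedP3 G) {u v : α}
    (huv : u ≠ v) (hn : ¬ G.Adj u v) : (G ⊔ edge u v).Colorable 2 :=
  hG.sup_edge_of_not_reachable le_rfl fun h =>
    (eq_or_adj_of_reachable (subsingleton_neighborSet_of_cliqueFree_three
      (hG.cliqueFree (by norm_num)) hP) h).elim huv hn

end SimpleGraph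

/-- A finite bipartite graph with at least one edge is χ-unfrozen iff it has no
induced `P₃`, and likewise it is ω-unfrozen iff it has no induced `P₃`. -/
theorem bipartite_chi_omega_unfrozen_iff_no_inducedP3 {V : Type*} [Fintype V]
    (G : SimpleGraph V) (hb : _root_.IsBipartite G) (h1 : G.edgeSet.Nonempty) :
    ((∀ u v : V, u ≠ v → ¬ G.Adj u v →
        (adjoinEdge G u v).chromaticNumber = G.chromaticNumber) ↔ ¬ HasInducedP3 G) ∧
    ((∀ u v : V, u ≠ v → ¬ G.Adj u v → clNum (adjoinEdge G u v) = clNum G) ↔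
      ¬ HasInducedP3 G) := by
  simp only [adjoinEdge_eq_sup_edge, clNum_eq_cliqueNum]
  have hG : G.Colorable 2 := hb.colorable_two
  have hne : G ≠ ⊥ := edgeSet_nonempty.mp h1
  have hne_sup : ∀ u v : V, u ≠ v → G ⊔ edge u v ≠ ⊥ := fun u v huv =>
    ne_bot_iff_exists_adj.mpr ⟨u, v, Or.inr ((edge_adj ..).mpr ⟨Or.inl ⟨rfl, rfl⟩, huv⟩)⟩
  have hχ : ∀ u v : V, u ≠ v →
      ((G ⊔ edge u v).chromaticNumber = G.chromaticNumber ↔ (G ⊔ edge u v).Colorable 2) :=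
    fun u v huv => by
      rw [chromaticNumber_eq_two_iff.mpr ⟨hG, hne⟩, chromaticNumber_eq_two_iff,
        and_iff_left (hne_sup u v huv)]
  have hω : ∀ u v : V, u ≠ v →
      ((G ⊔ edge u v).cliqueNum = G.cliqueNum ↔ (G ⊔ edge u v).CliqueFree 3) :=
    fun u v huv => by
      rw [(cliqueNum_eq_two_iff hne).mpr (hG.cliqueFree (by norm_num)),
        cliqueNum_eq_two_iff (hne_sup u v huv)]
  refine ⟨⟨fun h hP => ?_, fun hP u v huv hn => ?_⟩, ⟨fun h hP => ?_, fun hP u v huv hn => ?_⟩⟩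
  · obtain ⟨u, v, huv, hn, hK3⟩ := hP.exists_not_cliqueFree_sup_edge
    exact hK3 (((hχ u v huv).mp (h u v huv hn)).cliqueFree (by norm_num))
  · exact (hχ u v huv).mpr (colorable_two_sup_edge hG hP huv hn)
  · obtain ⟨u, v, huv, hn, hK3⟩ := hP.exists_not_cliqueFree_sup_edge
    exact hK3 ((hω u v huv).mp (h u v huv hn))
  · exact (hω u v huv).mpr ((colorable_two_sup_edge hG hP huv hn).cliqueFree (by norm_num))
end
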